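/- For any set M, predicate φ : M⁴ → Prop, using the Henkin semantics H(x,y;z,w)φ ↔ ∃f g : M → M, ∀x z, φ(x, f x, z, g z): the sentence ¬∃t, H(x,y;z,w)((y = w ↔ x = z) ∧ t ≠ y) holds in M if and only if M is Dedekind-finite (every injective f : M → M is surjective). -/
import Mathlib


/-- Ehrenfeucht's sentence `¬∃t H(x,y;z,w)((y = w ↔ x = z) ∧ t ≠ y)` (with the Henkin
quantifier interpreted via Skolem functions) holds in `M` iff `M` is Dedekind-finite. -/
theorem ehrenfeucht_sentence_iff_dedekind_finite (M : Type*) :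
    (¬ ∃ t : M, ∃ f g : M → M, ∀ x z : M, (f x = g z ↔ x = z) ∧ t ≠ f x) ↔
    (∀ f : M → M, Function.Injective f → Function.Surjective f) := by
  constructor
  · intro h f hf
    by_contra hns
    simp only [Function.Surjective, not_forall] at hns
    obtain ⟨t, ht⟩ := hns
    exact h ⟨t, f, f, fun x z => ⟨⟨fun e => hf e, fun e => e ▸ rfl⟩, fun e => ht.elim ⟨x, e.symm⟩⟩⟩
  · rintro h ⟨t, f, g, hfg⟩
    have hinj : Function.Injective f := fun x z e => by
      have := (hfg z z).1.mpr rfl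
      exact (hfg x z).1.mp (e.trans this)
    obtain ⟨x, hx⟩ := h f hinj t
    exact (hfg x x).2 hx.symm
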